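/- If σ is a non-degenerate k-simplex in ℝ^m (k ≥ 1), then its circumradius satisfies R(σ) ≤ L(σ)/(2·t(σ)). -/

import Mathlib

open Matrix Metric
open scoped Classical BigOperators

noncomputable section

/-- Euclidean space ℝ^m. -/
abbrev E (m : ℕ) := EuclideanSpace ℝ (Fin m)

/-- Euclidean norm of a plain vector. -/
noncomputable def euclNorm {n : ℕ} (v : Fin n → ℝ) : ℝ := Real.sqrt (∑ i, v i ^ 2)

/-- Largest singular value (operator norm) of a matrix. -/
noncomputable def largeSV {m k : ℕ} (P : Matrix (Fin m) (Fin k) ℝ) : ℝ :=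
  ⨆ x : {x : Fin k → ℝ // euclNorm x = 1}, euclNorm (P.mulVec x)

/-- Smallest singular value of a matrix. -/
noncomputable def smallSV {m k : ℕ} (P : Matrix (Fin m) (Fin k) ℝ) : ℝ :=
  ⨅ x : {x : Fin k → ℝ // euclNorm x = 1}, euclNorm (P.mulVec x)

/-- Matrix of edge vectors pᵢ − p₀ of a k-simplex. -/
noncomputable def vertMatrix {m k : ℕ} (p : Fin (k+1) → E m) : Matrix (Fin m) (Fin k) ℝ :=
  fun a j => p j.succ a - p 0 a

/-- Pseudo-inverse (PᵀP)⁻¹Pᵀ of a matrix of full column rank. -/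
noncomputable def pseudoInv {m k : ℕ} (P : Matrix (Fin m) (Fin k) ℝ) :
    Matrix (Fin k) (Fin m) ℝ := (Pᵀ * P)⁻¹ * Pᵀ

/-- Longest edge length of a simplex given by its vertices. -/
noncomputable def longEdge {m k : ℕ} (p : Fin (k+1) → E m) : ℝ :=
  ⨆ i, ⨆ j, dist (p i) (p j)

/-- Altitude of vertex i: distance to affine hull of the opposite facet. -/
noncomputable def altitude {m k : ℕ} (p : Fin (k+1) → E m) (i : Fin (k+1)) : ℝ :=
  Metric.infDist (p i) (↑(affineSpan ℝ (p '' {j | j ≠ i})) : Set (E m))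

/-- Thickness of a k-simplex: 1 if k = 0, else min altitude / (k · longest edge). -/
noncomputable def thickness {m k : ℕ} (p : Fin (k+1) → E m) : ℝ :=
  if k = 0 then 1 else (⨅ i, altitude p i) / (k * longEdge p)

/-- Longest edge of a finite vertex set. -/
noncomputable def fLongEdge {m : ℕ} (s : Finset (E m)) : ℝ := Metric.diam (s : Set (E m))

/-- Minimal altitude of a finite vertex set. -/
noncomputable def fMinAlt {m : ℕ} (s : Finset (E m)) : ℝ :=
  ⨅ p : {p // p ∈ s},
    Metric.infDist (p : E m) (↑(affineSpan ℝ ((s.erase (p : E m)) : Set (E m))) : Set (E m))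

/-- Thickness of a simplex given as a finite vertex set. -/
noncomputable def fThickness {m : ℕ} (s : Finset (E m)) : ℝ :=
  if s.card ≤ 1 then 1 else fMinAlt s / ((s.card - 1 : ℕ) * fLongEdge s)

/-- A simplex (finite vertex set) is Γ₀-good if every j-face has thickness ≥ Γ₀^j. -/
def isGood {m : ℕ} (Γ₀ : ℝ) (s : Finset (E m)) : Prop :=
  ∀ t ⊆ s, t.Nonempty → fThickness t ≥ Γ₀ ^ (t.card - 1)

/-- A Γ₀-flake: not Γ₀-good, but every facet is Γ₀-good. -/
def isFlake {m : ℕ} (Γ₀ : ℝ) (s : Finset (E m)) : Prop :=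
  ¬ isGood Γ₀ s ∧ ∀ p ∈ s, isGood Γ₀ (s.erase p)

/-!
Put `p₀` at the origin and write `v = c - p₀ = ∑ μⱼ uⱼ` in the edge vectors `uⱼ = pⱼ - p₀`.
Equidistance of `c` from `p₀` and `pⱼ` gives `⟪v, uⱼ⟫ = ‖uⱼ‖² / 2`, and since `pⱼ - μⱼ⁻¹ v` lies on
the facet opposite `pⱼ`, the minimal altitude `a` satisfies `|μⱼ| a ≤ ‖v‖`. Hence
`‖v‖² = ∑ μⱼ ‖uⱼ‖² / 2 ≤ k ‖v‖ L² / (2a)`, that is `R ≤ k L² / (2a) = L / (2t)`.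
-/

section AffineGeometry

variable {V P : Type*} [NormedAddCommGroup V] [NormedSpace ℝ V] [MetricSpace P]
  [NormedAddTorsor V P]

theorem abs_mul_infDist_le_norm (A : AffineSubspace ℝ P) {x y : P} (hy : y ∈ A) (μ : ℝ) (v : V)
    (h : μ • (x -ᵥ y) - v ∈ A.direction) : |μ| * infDist x A ≤ ‖v‖ := by
  rcases eq_or_ne μ 0 with rfl | hμ
  · simp
  have hq : -(μ⁻¹ • v) +ᵥ x ∈ A := by
    have hdir : μ⁻¹ • (μ • (x -ᵥ y) - v) ∈ A.direction := A.direction.smul_mem _ h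
    rw [smul_sub, smul_smul, inv_mul_cancel₀ hμ, one_smul] at hdir
    have := AffineSubspace.vadd_mem_of_mem_direction hdir hy
    rwa [sub_eq_neg_add, ← vadd_vadd, vsub_vadd] at this
  calc |μ| * infDist x A ≤ |μ| * dist x (-(μ⁻¹ • v) +ᵥ x) :=
        mul_le_mul_of_nonneg_left (infDist_le_dist_of_mem hq) (abs_nonneg μ)
    _ = ‖v‖ := by
        rw [dist_comm, dist_vadd_left, norm_neg, norm_smul, norm_inv, Real.norm_eq_abs,
          mul_inv_cancel_left₀ (abs_ne_zero.2 hμ)]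

theorem exists_sum_smul_vsub_eq_of_mem_affineSpan {k : ℕ} {p : Fin (k + 1) → P} {c : P}
    (hc : c ∈ affineSpan ℝ (Set.range p)) :
    ∃ μ : Fin k → ℝ, ∑ j, μ j • (p j.succ -ᵥ p 0) = c -ᵥ p 0 := by
  have hmem : c -ᵥ p 0 ∈ Submodule.span ℝ (Set.range fun i => p i -ᵥ p 0) := by
    rw [← vectorSpan_range_eq_span_range_vsub_right ℝ p 0, ← direction_affineSpan]
    exact AffineSubspace.vsub_mem_direction hc (mem_affineSpan ℝ ⟨0, rfl⟩)
  obtain ⟨μ, hμ⟩ := (Submodule.mem_span_range_iff_exists_fun ℝ).1 hmem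
  exact ⟨fun j => μ j.succ, by simpa [Fin.sum_univ_succ] using hμ⟩

end AffineGeometry

section InnerProduct

variable {V : Type*} [NormedAddCommGroup V] [InnerProductSpace ℝ V]

theorem real_inner_sub_eq_half_norm_sq_of_norm_sub_eq {v u : V} (h : ‖v - u‖ = ‖v‖) :
    inner ℝ v u = ‖u‖ ^ 2 / 2 := by
  have := norm_sub_sq_real v u
  rw [h] at this
  linarith

theorem two_mul_mul_norm_le_card_mul_sq {ι : Type*} [Fintype ι] (u : ι → V) (μ : ι → ℝ)
    {v : V} {a L : ℝ} (hv : ∑ i, μ i • u i = v) (hinner : ∀ i, inner ℝ v (u i) = ‖u i‖ ^ 2 / 2)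
    (hu : ∀ i, ‖u i‖ ≤ L) (hμ : ∀ i, |μ i| * a ≤ ‖v‖) :
    2 * a * ‖v‖ ≤ Fintype.card ι * L ^ 2 := by
  rcases le_or_gt a 0 with ha | ha
  · nlinarith [norm_nonneg v, sq_nonneg L, (Fintype.card ι).cast_nonneg (α := ℝ)]
  have hsq : ‖v‖ ^ 2 = ∑ i, μ i * (‖u i‖ ^ 2 / 2) := by
    rw [← real_inner_self_eq_norm_sq]
    nth_rw 2 [← hv]
    simp only [inner_sum, real_inner_smul_right, hinner]
  have hterm : ∀ i, 2 * a * (μ i * (‖u i‖ ^ 2 / 2)) ≤ ‖v‖ * L ^ 2 := fun i => by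
    have hμi : μ i * a ≤ ‖v‖ := (mul_le_mul_of_nonneg_right (le_abs_self _) ha.le).trans (hμ i)
    have huL : ‖u i‖ ^ 2 ≤ L ^ 2 := pow_le_pow_left₀ (norm_nonneg _) (hu i) 2
    nlinarith [norm_nonneg v, sq_nonneg ‖u i‖]
  have hmain : 2 * a * ‖v‖ ^ 2 ≤ Fintype.card ι * (‖v‖ * L ^ 2) := by
    calc 2 * a * ‖v‖ ^ 2 = ∑ i, 2 * a * (μ i * (‖u i‖ ^ 2 / 2)) := by rw [hsq, Finset.mul_sum]
      _ ≤ ∑ _i : ι, ‖v‖ * L ^ 2 := Finset.sum_le_sum fun i _ => hterm i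
      _ = Fintype.card ι * (‖v‖ * L ^ 2) := by simp
  rcases (norm_nonneg v).eq_or_lt with hv0 | hv0
  · rw [← hv0, mul_zero]; positivity
  · nlinarith

end InnerProduct

section Simplex

variable {m k : ℕ} (p : Fin (k + 1) → E m)

theorem dist_le_longEdge (i j : Fin (k + 1)) : dist (p i) (p j) ≤ longEdge p :=
  (le_ciSup (Set.finite_range _).bddAbove j).trans
    (le_ciSup (f := fun i => ⨆ j, dist (p i) (p j)) (Set.finite_range _).bddAbove i)

theorem longEdge_nonneg : 0 ≤ longEdge p :=
  dist_self (p 0) ▸ dist_le_longEdge p 0 0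

theorem iInf_altitude_le (i : Fin (k + 1)) : ⨅ j, altitude p j ≤ altitude p i :=
  ciInf_le (Set.finite_range _).bddBelow i

theorem thickness_eq_of_ne_zero (hk : k ≠ 0) :
    thickness p = (⨅ i, altitude p i) / (k * longEdge p) := if_neg hk

theorem iInf_altitude_pos_of_thickness_pos (hk : k ≠ 0) (h : 0 < thickness p) :
    0 < ⨅ i, altitude p i := by
  rw [thickness_eq_of_ne_zero p hk] at h
  exact lt_of_not_ge fun ha =>
    h.not_ge (div_nonpos_of_nonpos_of_nonneg ha (by have := longEdge_nonneg p; positivity))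

theorem abs_mul_altitude_succ_le {μ : Fin k → ℝ} {v : E m}
    (hv : ∑ i, μ i • (p i.succ -ᵥ p 0) = v) (j : Fin k) : |μ j| * altitude p j.succ ≤ ‖v‖ := by
  have hmem : ∀ i : Fin (k + 1), i ≠ j.succ → p i ∈ affineSpan ℝ (p '' {i | i ≠ j.succ}) :=
    fun i hi => subset_affineSpan ℝ _ ⟨i, hi, rfl⟩
  refine abs_mul_infDist_le_norm _ (hmem 0 (Fin.succ_ne_zero j).symm) _ _ ?_
  rw [← hv, ← Finset.add_sum_erase _ _ (Finset.mem_univ j), sub_add_cancel_left]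
  refine neg_mem (Submodule.sum_mem _ fun i hi => Submodule.smul_mem _ _ ?_)
  exact AffineSubspace.vsub_mem_direction
    (hmem _ fun h => Finset.ne_of_mem_erase hi (Fin.succ_injective k h))
    (hmem 0 (Fin.succ_ne_zero j).symm)

end Simplex

/-- Circumradius bound: R(σ) ≤ L(σ)/(2 t(σ)). -/
theorem stmt6 {m k : ℕ} (hk : 1 ≤ k) (p : Fin (k+1) → E m)
    (hnd : 0 < thickness p)
    (c : E m) (R : ℝ)
    (hc : c ∈ (↑(affineSpan ℝ (Set.range p)) : Set (E m)))
    (hR : ∀ i, dist c (p i) = R) :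
    R ≤ longEdge p / (2 * thickness p) := by
  have hk0 : k ≠ 0 := by omega
  have ha := iInf_altitude_pos_of_thickness_pos p hk0 hnd
  obtain ⟨μ, hμ⟩ := exists_sum_smul_vsub_eq_of_mem_affineSpan hc
  have hRv : R = ‖c -ᵥ p 0‖ := by rw [← hR 0, dist_eq_norm_vsub]
  have hkey := two_mul_mul_norm_le_card_mul_sq _ μ hμ
    (fun j => real_inner_sub_eq_half_norm_sq_of_norm_sub_eq (by
      rw [vsub_sub_vsub_cancel_right, ← dist_eq_norm_vsub, ← dist_eq_norm_vsub, hR, hR]))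
    (fun j => (dist_eq_norm_vsub _ _ _).symm.trans_le (dist_le_longEdge p _ _))
    (fun j => (mul_le_mul_of_nonneg_left (iInf_altitude_le p j.succ) (abs_nonneg _)).trans
      (abs_mul_altitude_succ_le p hμ j))
  rw [Fintype.card_fin] at hkey
  rw [thickness_eq_of_ne_zero p hk0, mul_div_assoc', div_div_eq_mul_div,
    le_div_iff₀ (by positivity), hRv]
  nlinarith
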